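/- arXiv:2008.00898 — 4 statements merged into one kernel-verified Lean document; each statement's English description precedes it below -/
import Mathlib

section
/- The number of antichains of size i in the poset of integer points {(x,y) : y ≥ 1, 1 ≤ x ≤ n−1, y ≤ x} with componentwise partial order equals C(n, 2i), for 0 ≤ i ≤ n/2. -/
/-!
Read a point `(x, y)` of the triangle as the interval `[y, x + 1] ⊆ [1, n]`. Two points are
incomparable exactly when one of these intervals lies strictly inside the other, with distinct
endpoints at both ends, so an antichain of size `i` is a strictly nested family of `i` intervals.
Such a family is determined by its `2 * i` distinct endpoints: the `k`-th smallest endpoint is the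
left end of the interval whose right end is the `k`-th largest. This is a bijection between the
antichains of size `i` and the `2 * i`-subsets of `[1, n]`.
-/

/-- The poset of integer points (x,y) with 1 ≤ x ≤ n−1 and 1 ≤ y ≤ x. -/
def trianglePoset (n : ℕ) : Finset (ℕ × ℕ) :=
  (Finset.Icc 1 (n - 1) ×ˢ Finset.Icc 1 (n - 1)).filter (fun p => p.2 ≤ p.1)

/-- A finite set of lattice points is an antichain under the componentwise order. -/
def IsLatticeAntichain (A : Finset (ℕ × ℕ)) : Prop :=
  ∀ p ∈ A, ∀ q ∈ A, p ≠ q → ¬(p.1 ≤ q.1 ∧ p.2 ≤ q.2)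

instance : DecidablePred IsLatticeAntichain := fun A => by
  unfold IsLatticeAntichain; infer_instance

open Finset

theorem Finset.card_filter_lt_orderEmbOfFin {α : Type*} [LinearOrder α] (s : Finset α) {k : ℕ}
    (h : #s = k) (j : Fin k) : #(s.filter (· < s.orderEmbOfFin h j)) = j := by
  have hlt : s.filter (· < s.orderEmbOfFin h j) = (Iio j).image (s.orderEmbOfFin h) := by
    ext t
    simp only [mem_filter, mem_image, mem_Iio]
    constructor
    · rintro ⟨hts, htj⟩
      obtain ⟨l, rfl⟩ : t ∈ Set.range (s.orderEmbOfFin h) := by simpa using hts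
      exact ⟨l, (s.orderEmbOfFin h).lt_iff_lt.mp htj, rfl⟩
    · rintro ⟨l, hlj, rfl⟩
      exact ⟨orderEmbOfFin_mem s h l, (s.orderEmbOfFin h).lt_iff_lt.mpr hlj⟩
  rw [hlt, card_image_of_injective _ (s.orderEmbOfFin h).injective, Fin.card_Iio]

theorem Finset.orderEmbOfFin_eq_of_card_filter_lt {α : Type*} [LinearOrder α] {s : Finset α}
    {k : ℕ} (h : #s = k) {t : α} (ht : t ∈ s) {j : Fin k} (hj : #(s.filter (· < t)) = j) :
    s.orderEmbOfFin h j = t := by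
  obtain ⟨l, rfl⟩ : t ∈ Set.range (s.orderEmbOfFin h) := by simpa using ht
  rw [card_filter_lt_orderEmbOfFin] at hj
  rw [Fin.ext hj]

theorem mem_trianglePoset {n : ℕ} {p : ℕ × ℕ} :
    p ∈ trianglePoset n ↔ 1 ≤ p.2 ∧ p.2 ≤ p.1 ∧ p.1 ≤ n - 1 := by
  simp only [trianglePoset, mem_filter, mem_product, mem_Icc]
  omega

theorem snd_le_fst_of_mem_trianglePoset {n : ℕ} {p : ℕ × ℕ} (hp : p ∈ trianglePoset n) :
    p.2 ≤ p.1 :=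
  (mem_trianglePoset.mp hp).2.1

theorem isLatticeAntichain_image {ι : Type*} [LinearOrder ι] (s : Finset ι) {f : ι → ℕ × ℕ}
    (hfst : StrictAnti (Prod.fst ∘ f)) (hsnd : StrictMono (Prod.snd ∘ f)) :
    IsLatticeAntichain (s.image f) := by
  simp only [IsLatticeAntichain, mem_image]
  rintro _ ⟨j, -, rfl⟩ _ ⟨k, -, rfl⟩ hne ⟨hfst_le, hsnd_le⟩
  rcases lt_trichotomy j k with hjk | rfl | hkj
  · exact (hfst hjk).not_ge hfst_le
  · exact hne rfl
  · exact (hsnd hkj).not_ge hsnd_le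

namespace IsLatticeAntichain

variable {A : Finset (ℕ × ℕ)} (hA : IsLatticeAntichain A) {p q : ℕ × ℕ}
include hA

theorem lt_or_gt (hp : p ∈ A) (hq : q ∈ A) (hne : p ≠ q) :
    (p.1 < q.1 ∧ q.2 < p.2) ∨ (q.1 < p.1 ∧ p.2 < q.2) := by
  have hpq := hA p hp q hq hne
  have hqp := hA q hq p hp hne.symm
  have : p.1 ≠ q.1 ∨ p.2 ≠ q.2 := by
    contrapose! hne
    exact Prod.ext hne.1 hne.2
  omega

theorem injOn_fst : Set.InjOn Prod.fst (A : Set (ℕ × ℕ)) := by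
  intro p hp q hq h
  by_contra hne
  rcases hA.lt_or_gt hp hq hne with hc | hc <;> omega

theorem injOn_snd : Set.InjOn Prod.snd (A : Set (ℕ × ℕ)) := by
  intro p hp q hq h
  by_contra hne
  rcases hA.lt_or_gt hp hq hne with hc | hc <;> omega

theorem injOn_fst_add_one : Set.InjOn (·.1 + 1) (A : Set (ℕ × ℕ)) :=
  fun _ hp _ hq h => hA.injOn_fst hp hq (Nat.succ_injective h)

theorem snd_le_fst (hdiag : ∀ p ∈ A, p.2 ≤ p.1) (hp : p ∈ A) (hq : q ∈ A) : p.2 ≤ q.1 := by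
  have := hdiag p hp
  have := hdiag q hq
  rcases eq_or_ne p q with rfl | hne
  · assumption
  · rcases hA.lt_or_gt hp hq hne with hc | hc <;> omega

theorem card_filter_snd_lt_add_card_filter_fst_lt (hp : p ∈ A) :
    #(A.filter (·.2 < p.2)) + #(A.filter (·.1 < p.1)) + 1 = #A := by
  have hdisj : Disjoint (A.filter (·.2 < p.2)) (A.filter (·.1 < p.1)) := by
    refine disjoint_filter.mpr fun q hq hsnd hfst => ?_
    rcases eq_or_ne q p with rfl | hne
    · omega
    · rcases hA.lt_or_gt hq hp hne with hc | hc <;> omega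
  have hunion : A.filter (·.2 < p.2) ∪ A.filter (·.1 < p.1) = A.erase p := by
    ext q
    simp only [mem_union, mem_filter, mem_erase]
    constructor
    · rintro (⟨hq, hlt⟩ | ⟨hq, hlt⟩) <;> exact ⟨by rintro rfl; omega, hq⟩
    · rintro ⟨hne, hq⟩
      rcases hA.lt_or_gt hq hp hne with hc | hc
      exacts [Or.inr ⟨hq, hc.1⟩, Or.inl ⟨hq, hc.2⟩]
  rw [← card_union_of_disjoint hdisj, hunion, card_erase_add_one hp]

end IsLatticeAntichain

def endpoints (A : Finset (ℕ × ℕ)) : Finset ℕ :=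
  A.image Prod.snd ∪ A.image (·.1 + 1)

def pairEndpoints {i : ℕ} (S : Finset ℕ) (hS : #S = 2 * i) : Finset (ℕ × ℕ) :=
  univ.image fun j : Fin i =>
    (S.orderEmbOfFin hS ⟨2 * i - 1 - j, by omega⟩ - 1, S.orderEmbOfFin hS ⟨j, by omega⟩)

section pairEndpoints

variable {i n : ℕ} {S : Finset ℕ} (hS : #S = 2 * i)

theorem card_pairEndpoints : #(pairEndpoints S hS) = i := by
  rw [pairEndpoints, card_image_of_injective, card_univ, Fintype.card_fin]
  intro j k hjk
  simpa [Fin.ext_iff] using congrArg Prod.snd hjk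

variable (hSn : S ⊆ Icc 1 n)
include hSn

theorem pairEndpoints_subset_trianglePoset : pairEndpoints S hS ⊆ trianglePoset n := by
  simp only [subset_iff, pairEndpoints, mem_image, mem_univ, true_and, mem_trianglePoset]
  rintro _ ⟨j, rfl⟩
  have hlo := mem_Icc.mp (hSn (orderEmbOfFin_mem S hS ⟨j, by omega⟩))
  have hhi := mem_Icc.mp (hSn (orderEmbOfFin_mem S hS ⟨2 * i - 1 - j, by omega⟩))
  have hlt : S.orderEmbOfFin hS ⟨j, by omega⟩ < S.orderEmbOfFin hS ⟨2 * i - 1 - j, by omega⟩ :=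
    (S.orderEmbOfFin hS).lt_iff_lt.mpr (Fin.mk_lt_mk.mpr (by omega))
  omega

theorem isLatticeAntichain_pairEndpoints : IsLatticeAntichain (pairEndpoints S hS) := by
  refine isLatticeAntichain_image _ (fun j k hjk => ?_) (fun j k hjk => ?_)
  · have hpos := mem_Icc.mp (hSn (orderEmbOfFin_mem S hS ⟨2 * i - 1 - k, by omega⟩))
    have hlt : S.orderEmbOfFin hS ⟨2 * i - 1 - k, by omega⟩
        < S.orderEmbOfFin hS ⟨2 * i - 1 - j, by omega⟩ :=
      (S.orderEmbOfFin hS).lt_iff_lt.mpr (Fin.mk_lt_mk.mpr (by omega))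
    simp only [Function.comp_apply]
    omega
  · exact (S.orderEmbOfFin hS).lt_iff_lt.mpr (Fin.mk_lt_mk.mpr hjk)

end pairEndpoints

theorem endpoints_subset_Icc {n : ℕ} {A : Finset (ℕ × ℕ)} (hA : A ⊆ trianglePoset n) :
    endpoints A ⊆ Icc 1 n := by
  simp only [subset_iff, endpoints, mem_union, mem_image, mem_Icc]
  rintro _ (⟨p, hp, rfl⟩ | ⟨p, hp, rfl⟩) <;>
  · have := mem_trianglePoset.mp (hA hp)
    omega

section endpoints

variable {A : Finset (ℕ × ℕ)} (hA : IsLatticeAntichain A) (hdiag : ∀ p ∈ A, p.2 ≤ p.1)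
  {p : ℕ × ℕ}
include hA hdiag

theorem disjoint_image_snd_image_fst_add_one :
    Disjoint (A.image Prod.snd) (A.image (·.1 + 1)) := by
  simp only [disjoint_left, mem_image]
  rintro _ ⟨p, hp, rfl⟩ ⟨q, hq, hqp⟩
  have := hA.snd_le_fst hdiag hp hq
  omega

theorem card_endpoints : #(endpoints A) = 2 * #A := by
  rw [endpoints, card_union_of_disjoint (disjoint_image_snd_image_fst_add_one hA hdiag),
    card_image_of_injOn hA.injOn_snd, card_image_of_injOn hA.injOn_fst_add_one]
  ring

theorem card_filter_endpoints_lt_snd (hp : p ∈ A) :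
    #((endpoints A).filter (· < p.2)) = #(A.filter (·.2 < p.2)) := by
  have hright : (A.image (·.1 + 1)).filter (· < p.2) = ∅ := by
    simp only [filter_image, image_eq_empty, filter_eq_empty_iff]
    intro q hq
    have := hA.snd_le_fst hdiag hp hq
    omega
  rw [endpoints, filter_union, hright, union_empty, filter_image,
    card_image_of_injOn (hA.injOn_snd.mono (coe_subset.mpr (filter_subset _ _)))]

theorem card_filter_endpoints_lt_fst_add_one (hp : p ∈ A) :
    #((endpoints A).filter (· < p.1 + 1)) = #A + #(A.filter (·.1 < p.1)) := by
  have hleft : (A.image Prod.snd).filter (· < p.1 + 1) = A.image Prod.snd := by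
    simp only [filter_image, filter_true_of_mem fun q hq =>
      Nat.lt_succ_of_le (hA.snd_le_fst hdiag hq hp)]
  rw [endpoints, filter_union, hleft, filter_image, card_union_of_disjoint
      ((disjoint_image_snd_image_fst_add_one hA hdiag).mono_right (image_subset_image
        (filter_subset _ _))),
    card_image_of_injOn hA.injOn_snd, card_image_of_injOn (hA.injOn_fst_add_one.mono
      (coe_subset.mpr (filter_subset _ _)))]
  simp only [add_lt_add_iff_right]

theorem pairEndpoints_endpoints (hS : #(endpoints A) = 2 * #A) : pairEndpoints _ hS = A := by
  refine (eq_of_subset_of_card_le (fun p hp => ?_) (card_pairEndpoints hS).le).symm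
  have hsum := hA.card_filter_snd_lt_add_card_filter_fst_lt hp
  have hsnd := orderEmbOfFin_eq_of_card_filter_lt hS (mem_union_left _ (mem_image_of_mem _ hp))
    (j := ⟨#(A.filter (·.2 < p.2)), by omega⟩) (card_filter_endpoints_lt_snd hA hdiag hp)
  have hfst := orderEmbOfFin_eq_of_card_filter_lt hS
    (mem_union_right _ (mem_image_of_mem (·.1 + 1) hp))
    (j := ⟨2 * #A - 1 - #(A.filter (·.2 < p.2)), by omega⟩)
    (by rw [card_filter_endpoints_lt_fst_add_one hA hdiag hp, Fin.val_mk]; omega)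
  simp only [pairEndpoints, mem_image, mem_univ, true_and]
  exact ⟨⟨#(A.filter (·.2 < p.2)), by omega⟩,
    Prod.ext ((congrArg (· - 1) hfst).trans (Nat.add_sub_cancel _ _)) hsnd⟩

end endpoints

theorem endpoints_pairEndpoints {i n : ℕ} {S : Finset ℕ} (hS : #S = 2 * i)
    (hSn : S ⊆ Icc 1 n) : endpoints (pairEndpoints S hS) = S := by
  have hdiag p (hp : p ∈ pairEndpoints S hS) : p.2 ≤ p.1 :=
    snd_le_fst_of_mem_trianglePoset (pairEndpoints_subset_trianglePoset hS hSn hp)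
  refine eq_of_subset_of_card_le ?_ ?_
  · simp only [subset_iff, endpoints, pairEndpoints, mem_union, image_image, mem_image,
      mem_univ, true_and]
    rintro _ (⟨j, rfl⟩ | ⟨j, rfl⟩)
    · exact orderEmbOfFin_mem S hS _
    · have := mem_Icc.mp (hSn (orderEmbOfFin_mem S hS ⟨2 * i - 1 - j, by omega⟩))
      simp only [Function.comp_apply, Nat.sub_add_cancel this.1]
      exact orderEmbOfFin_mem S hS _
  · rw [card_endpoints (isLatticeAntichain_pairEndpoints hS hSn) hdiag, card_pairEndpoints, hS]

theorem antichains_triangle_general (n i : ℕ) :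
    (((trianglePoset n).powersetCard i).filter IsLatticeAntichain).card
      = n.choose (2 * i) := by
  rw [show n.choose (2 * i) = #(powersetCard (2 * i) (Icc 1 n)) by simp]
  refine card_bij' (fun A _ => endpoints A)
    (fun S hS => pairEndpoints S (mem_powersetCard.mp hS).2) ?_ ?_ ?_ ?_
  · simp only [mem_filter, mem_powersetCard]
    rintro A ⟨⟨hAT, rfl⟩, hA⟩
    exact ⟨endpoints_subset_Icc hAT,
      card_endpoints hA fun p hp => snd_le_fst_of_mem_trianglePoset (hAT hp)⟩
  · intro S hS
    obtain ⟨hSn, hSc⟩ := mem_powersetCard.mp hS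
    simp only [mem_filter, mem_powersetCard]
    exact ⟨⟨pairEndpoints_subset_trianglePoset hSc hSn, card_pairEndpoints hSc⟩,
      isLatticeAntichain_pairEndpoints hSc hSn⟩
  · simp only [mem_filter, mem_powersetCard]
    rintro A ⟨⟨hAT, rfl⟩, hA⟩
    exact pairEndpoints_endpoints hA (fun p hp => snd_le_fst_of_mem_trianglePoset (hAT hp)) _
  · intro S hS
    exact endpoints_pairEndpoints _ (mem_powersetCard.mp hS).1

/-- The number of antichains of size `i` in the poset
`{(x,y) : y ≥ 1, 1 ≤ x ≤ n−1, y ≤ x}` with componentwise order equals `C(n, 2i)`,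
for `0 ≤ i ≤ n/2`. -/
theorem antichains_triangle (n i : ℕ) (hi : i ≤ n / 2) :
    (((trianglePoset n).powersetCard i).filter IsLatticeAntichain).card
      = n.choose (2 * i) :=
  antichains_triangle_general n i
end

section
/- The number of NE lattice paths of length 2m (from a fixed starting point, with steps N = (0,1) and E = (1,0)) that end with an N-step and have exactly i maximal N-runs not counting the final N-run equals C(2m, 2i+1). -/
/-!
Prepend a virtual E-step to the path. A path of length `n` is then determined by the set of
the `n` positions at which the direction changes, so exactly `n.choose j` paths have `j`
changes. Rises (E to N) and falls (N to E) alternate and start with a rise, so the path ends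
with an N-step and has `i + 1` N-runs exactly when it has `2 * i + 1` changes.
-/

/-- The number of maximal N-runs of an NE-path, encoded as a list of booleans
(`true` = N-step, `false` = E-step): a run starts at the head if it is an N-step,
or at any N-step immediately preceded by an E-step. -/
def nRuns (l : List Bool) : ℕ :=
  (if l.head? = some true then 1 else 0) + (l.zip l.tail).count (false, true)

open Finset

/- `b` plays the role of the step preceding the word `l`: `changes b l` counts the steps of `l`
that differ from their predecessor, `rises b l` those that are an N-step after an E-step. -/
def changes : Bool → List Bool → ℕ
  | _, [] => 0
  | b, c :: l => (if b = c then 0 else 1) + changes c l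

def rises : Bool → List Bool → ℕ
  | _, [] => 0
  | b, c :: l => (if !b && c then 1 else 0) + rises c l

theorem card_changes_eq_choose (n j : ℕ) (b : Bool) :
    #{f : Fin n → Bool | changes b (List.ofFn f) = j} = n.choose j := by
  induction n generalizing b j with
  | zero => cases j <;> simp [changes, filter_true_of_mem, filter_false_of_mem]
  | succ n ih =>
    rw [card_filter, ← (Fin.consEquiv _).sum_comp, Fintype.sum_prod_type, Fintype.sum_bool]
    simp only [Fin.consEquiv, Equiv.coe_fn_mk, List.ofFn_succ, Fin.cons_zero, Fin.cons_succ,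
      changes, ← card_filter]
    cases b <;> cases j <;> simp [add_comm 1, ih, Nat.choose_succ_succ, add_comm]

theorem count_zip_cons_eq_rises (c : Bool) (l : List Bool) :
    ((c :: l).zip l).count (false, true) = rises c l := by
  induction l generalizing c with
  | nil => rfl
  | cons d l ih =>
    simp only [List.zip_cons_cons, List.count_cons, ih, rises]
    cases c <;> cases d <;> simp [add_comm]

theorem nRuns_eq_rises (l : List Bool) : nRuns l = rises false l := by
  cases l with
  | nil => rfl
  | cons c l => simp [nRuns, rises, count_zip_cons_eq_rises]

theorem two_mul_rises_add_toNat (b : Bool) (l : List Bool) :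
    2 * rises b l + b.toNat = changes b l + (l.getLastD b).toNat := by
  induction l generalizing b with
  | nil => simp [rises, changes]
  | cons c l ih =>
    have := ih c
    rw [List.getLastD_cons, rises, changes]
    cases b <;> cases c <;> simp at this ⊢ <;> omega

theorem getLast?_eq_some_true_and_nRuns_eq_iff (l : List Bool) (i : ℕ) :
    l.getLast? = some true ∧ nRuns l = i + 1 ↔ changes false l = 2 * i + 1 := by
  have key := two_mul_rises_add_toNat false l
  rw [nRuns_eq_rises]
  cases l with
  | nil => simp [changes]
  | cons c l =>
    rw [List.getLastD_cons] at key
    rw [List.getLast?_cons, ← List.getLastD_eq_getLast?]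
    generalize l.getLastD c = last at key ⊢
    cases last <;> simp at key ⊢ <;> omega

/-- The number of NE lattice paths of length 2m that end with an N-step and have
exactly i maximal N-runs not counting the final N-run equals C(2m, 2i+1). -/
theorem ne_paths_ending_N (m i : ℕ) :
    (Finset.univ.filter (fun f : Fin (2 * m) → Bool =>
        (List.ofFn f).getLast? = some true ∧ nRuns (List.ofFn f) = i + 1)).card
      = (2 * m).choose (2 * i + 1) := by
  simp_rw [getLast?_eq_some_true_and_nRuns_eq_iff]
  exact card_changes_eq_choose _ _ false
end

section
/- For nonnegative integers j, k with k+1 ≤ j ≤ 2k, the polynomial ∑_i h_i t^i, where h_i = ∑_{i1+i2=i, 0≤i1≤j−k−2, 1≤i2≤2k−j+1} C(2(j−k−1), 2i1+1)·N(2k−j+1, i2), is symmetric: h_i = h_{k−i} for all i. Here N denotes the Narayana number. -/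
/-- The Narayana number N(n,i) = (1/n)·C(n,i)·C(n,i−1). -/
def narayana (n i : ℕ) : ℕ := n.choose i * n.choose (i - 1) / n

lemma narayana_symm (m i : ℕ) (h1 : 1 ≤ i) (h2 : i ≤ m) :
    narayana m i = narayana m (m + 1 - i) := by
  unfold narayana
  have e1 : m.choose (m + 1 - i) = m.choose (i - 1) := by
    have : m + 1 - i = m - (i - 1) := by omega
    rw [this, Nat.choose_symm (by omega)]
  have e2 : m.choose (m + 1 - i - 1) = m.choose i := by
    have : m + 1 - i - 1 = m - i := by omega
    rw [this, Nat.choose_symm h2]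
  rw [e1, e2, Nat.mul_comm]

/-- For k+1 ≤ j ≤ 2k, the sequence
h_i = ∑_{i1+i2=i, 0≤i1≤j−k−2, 1≤i2≤2k−j+1} C(2(j−k−1), 2i1+1)·N(2k−j+1, i2)
is symmetric: h_i = h_{k−i}. -/
theorem extension_h_symmetric (k j : ℕ) (h1 : k + 1 ≤ j) (h2 : j ≤ 2 * k) :
    ∀ i ≤ k,
      (∑ p ∈ (Finset.range (j - k - 1) ×ˢ Finset.Icc 1 (2 * k - j + 1)).filter
          (fun p => p.1 + p.2 = i),
          (2 * (j - k - 1)).choose (2 * p.1 + 1) * narayana (2 * k - j + 1) p.2)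
      = ∑ p ∈ (Finset.range (j - k - 1) ×ˢ Finset.Icc 1 (2 * k - j + 1)).filter
          (fun p => p.1 + p.2 = k - i),
          (2 * (j - k - 1)).choose (2 * p.1 + 1) * narayana (2 * k - j + 1) p.2 := by
  intro i hi
  set a := j - k - 1 with ha
  set m := 2 * k - j + 1 with hm
  have ham : a + m = k := by omega
  refine Finset.sum_nbij' (i := fun p => (a - 1 - p.1, m + 1 - p.2))
    (j := fun p => (a - 1 - p.1, m + 1 - p.2)) ?_ ?_ ?_ ?_ ?_
  · intro p hp
    simp only [Finset.mem_filter, Finset.mem_product, Finset.mem_range,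
      Finset.mem_Icc] at hp ⊢
    omega
  · intro p hp
    simp only [Finset.mem_filter, Finset.mem_product, Finset.mem_range,
      Finset.mem_Icc] at hp ⊢
    omega
  · intro p hp
    simp only [Finset.mem_filter, Finset.mem_product, Finset.mem_range,
      Finset.mem_Icc] at hp
    ext <;> simp <;> omega
  · intro p hp
    simp only [Finset.mem_filter, Finset.mem_product, Finset.mem_range,
      Finset.mem_Icc] at hp
    ext <;> simp <;> omega
  · intro p hp
    simp only [Finset.mem_filter, Finset.mem_product, Finset.mem_range,
      Finset.mem_Icc] at hp
    have hc : (2 * a).choose (2 * (a - 1 - p.1) + 1) = (2 * a).choose (2 * p.1 + 1) := by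
      have : 2 * (a - 1 - p.1) + 1 = 2 * a - (2 * p.1 + 1) := by omega
      rw [this, Nat.choose_symm (by omega)]
    rw [hc, ← narayana_symm m p.2 hp.1.2.1 hp.1.2.2]
end

section
/- For each k, the sequence h_i = C(2k−1, 2i) + C(2k−2, 2(i−1)), 0 ≤ i ≤ k, is symmetric: h_i = h_{k−i}. -/
lemma two_term_aux (a b : ℕ) :
    (2*a+2*b+3).choose (2*a+2) + (2*a+2*b+2).choose (2*a)
      = (2*a+2*b+3).choose (2*b+2) + (2*a+2*b+2).choose (2*b) := by
  have h1 : (2*a+2*b+3).choose (2*b+2) = (2*a+2*b+3).choose (2*a+1) := by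
    have h := Nat.choose_symm (show 2*a+1 ≤ 2*a+2*b+3 by omega)
    rwa [show (2*a+2*b+3) - (2*a+1) = 2*b+2 from by omega] at h
  have h2 : (2*a+2*b+2).choose (2*b) = (2*a+2*b+2).choose (2*a+2) := by
    have h := Nat.choose_symm (show 2*a+2 ≤ 2*a+2*b+2 by omega)
    rwa [show (2*a+2*b+2) - (2*a+2) = 2*b from by omega] at h
  have h3 : (2*a+2*b+3).choose (2*a+2)
      = (2*a+2*b+2).choose (2*a+1) + (2*a+2*b+2).choose (2*a+2) :=
    Nat.choose_succ_succ (2*a+2*b+2) (2*a+1)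
  have h4 : (2*a+2*b+3).choose (2*a+1)
      = (2*a+2*b+2).choose (2*a) + (2*a+2*b+2).choose (2*a+1) :=
    Nat.choose_succ_succ (2*a+2*b+2) (2*a)
  omega

/-- The sequence h_i = C(2k−1, 2i) + C(2k−2, 2(i−1)), 0 ≤ i ≤ k, is symmetric
(with the convention that the second term vanishes for i = 0, since C(n,m) = 0
when m < 0). -/
theorem two_term_h_symmetric (k : ℕ) :
    ∀ i ≤ k,
      ((2 * k - 1).choose (2 * i) + if i = 0 then 0 else (2 * k - 2).choose (2 * (i - 1)))
        = ((2 * k - 1).choose (2 * (k - i)) +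
            if k - i = 0 then 0 else (2 * k - 2).choose (2 * (k - i - 1))) := by
  intro i hi
  rcases Nat.eq_zero_or_pos i with rfl | hi1
  · rcases Nat.eq_zero_or_pos k with rfl | hk
    · simp
    · rw [if_pos rfl, if_neg (by omega)]
      rw [Nat.mul_zero, Nat.choose_zero_right,
          Nat.choose_eq_zero_of_lt (by omega : 2*k-1 < 2*(k-0)),
          show 2*(k-0-1) = 2*k-2 from by omega, Nat.choose_self]
  · rcases eq_or_lt_of_le hi with rfl | hik
    · rw [if_neg (by omega), if_pos (by omega)]
      rw [Nat.sub_self, Nat.mul_zero, Nat.choose_zero_right,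
          Nat.choose_eq_zero_of_lt (by omega : 2*i-1 < 2*i),
          show 2*(i-1) = 2*i-2 from by omega, Nat.choose_self]
    · obtain ⟨a, rfl⟩ : ∃ a, i = a + 1 := ⟨i - 1, by omega⟩
      obtain ⟨b, rfl⟩ : ∃ b, k = a + b + 2 := ⟨k - a - 2, by omega⟩
      rw [if_neg (by omega), if_neg (by omega)]
      have := two_term_aux a b
      convert this using 3 <;> omega
end
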